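/- arXiv:1705.06162 — 7 statements merged into one kernel-verified Lean document; each statement's English description precedes it below -/
import Mathlib

section
/- Let p, q, r, a, ν be real numbers with q ≠ 0, and suppose that 4 ν r a² − p a + ν = 0 and A = −12 ν r a / q. Then the function U(ξ) = A · sech²(ξ) satisfies (p a − ν) U(ξ) + (q a / 2) U(ξ)² − ν r a² U″(ξ) = 0 for all ξ ∈ ℝ. -/
/-! Differentiating twice, `(sech² ξ)'' = 4 sech² ξ - 6 sech⁴ ξ`. Substituting `U = A sech²`, the
coefficient of `sech²` is `A (p a - ν - 4 ν r a²)` and that of `sech⁴` is `A (q a A / 2 + 6 ν r a²)`;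
both vanish by the two relations on the parameters. -/

open Real

theorem hasDerivAt_one_div_cosh_sq (x : ℝ) :
    HasDerivAt (fun x => (1 / cosh x) ^ 2) (-2 * sinh x / cosh x ^ 3) x := by
  have hcosh : cosh x ≠ 0 := (cosh_pos x).ne'
  refine (((hasDerivAt_const x (1 : ℝ)).fun_div (hasDerivAt_cosh x) hcosh).fun_pow 2).congr_deriv
    ?_
  norm_num
  field_simp

theorem deriv_deriv_one_div_cosh_sq (x : ℝ) :
    deriv (deriv fun x => (1 / cosh x) ^ 2) x =
      4 * (1 / cosh x) ^ 2 - 6 * ((1 / cosh x) ^ 2) ^ 2 := by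
  have hcosh : cosh x ≠ 0 := (cosh_pos x).ne'
  have hderiv := ((hasDerivAt_sinh x).const_mul (-2)).fun_div
    ((hasDerivAt_cosh x).fun_pow 3) (pow_ne_zero 3 hcosh)
  rw [funext fun y => (hasDerivAt_one_div_cosh_sq y).deriv, hderiv.deriv]
  norm_num
  field_simp
  linear_combination 6 * sinh_sq x

/-- If `4 ν r a² - p a + ν = 0` and `A = -12 ν r a / q` (with `q ≠ 0`), then
`U(ξ) = A sech²(ξ)` solves the once-integrated RLW traveling wave equation
`(p a - ν) U + (q a / 2) U² - ν r a² U'' = 0` for all `ξ`. -/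
theorem rlw_sech_solution
    (p q r a ν A : ℝ) (hq : q ≠ 0)
    (h1 : 4 * ν * r * a ^ 2 - p * a + ν = 0)
    (hA : A = -12 * ν * r * a / q) :
    ∀ ξ : ℝ,
      (p * a - ν) * (A * (1 / Real.cosh ξ) ^ 2)
      + q * a / 2 * (A * (1 / Real.cosh ξ) ^ 2) ^ 2
      - ν * r * a ^ 2 * deriv (deriv (fun ξ : ℝ => A * (1 / Real.cosh ξ) ^ 2)) ξ = 0 := by
  intro ξ
  have hqA : q * A = -12 * ν * r * a := by
    rw [hA]
    field_simp
  rw [deriv_const_mul_field', deriv_const_mul_field']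
  dsimp only
  rw [deriv_deriv_one_div_cosh_sq]
  linear_combination (-A * (1 / cosh ξ) ^ 2) * h1 + (a * A * ((1 / cosh ξ) ^ 2) ^ 2 / 2) * hqA
end

section
/- Let p, q, r, a, ν be real numbers with q ≠ 0, and suppose that 4 ν r a² − p a + ν = 0 and A = 12 ν r a / q. Then the function U(ξ) = A · csch²(ξ) satisfies (p a − ν) U(ξ) + (q a / 2) U(ξ)² − ν r a² U″(ξ) = 0 for all ξ ≠ 0. -/
/-! Since `(csch² ξ)'' = 4 csch² ξ + 6 csch⁴ ξ`, the equation for `U = A csch² ξ` splits into a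
`csch²` part, which vanishes by `p a - ν = 4 ν r a²`, and a `csch⁴` part, which vanishes by
`q A = 12 ν r a`. -/

open Real Filter Topology

namespace Real

theorem hasDerivAt_inv_sinh_sq {x : ℝ} (hx : x ≠ 0) :
    HasDerivAt (fun y => (1 / sinh y) ^ 2) (-2 * cosh x / sinh x ^ 3) x := by
  have hs : sinh x ≠ 0 := sinh_ne_zero.mpr hx
  simp only [one_div, inv_pow]
  refine (((hasDerivAt_sinh x).fun_pow 2).fun_inv (pow_ne_zero 2 hs)).congr_deriv ?_
  field_simp
  ring

theorem deriv_deriv_inv_sinh_sq {x : ℝ} (hx : x ≠ 0) :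
    deriv (deriv fun y => (1 / sinh y) ^ 2) x = 4 * (1 / sinh x) ^ 2 + 6 * (1 / sinh x) ^ 4 := by
  have hs : sinh x ≠ 0 := sinh_ne_zero.mpr hx
  have h_deriv : deriv (fun y => (1 / sinh y) ^ 2) =ᶠ[𝓝 x] fun y => -2 * cosh y / sinh y ^ 3 := by
    filter_upwards [isOpen_ne.mem_nhds hx] with y hy
    exact (hasDerivAt_inv_sinh_sq hy).deriv
  rw [h_deriv.deriv_eq]
  rw [(((hasDerivAt_cosh x).const_mul (-2)).fun_div ((hasDerivAt_sinh x).fun_pow 3)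
    (pow_ne_zero 3 hs)).deriv]
  field_simp
  norm_num
  linear_combination (6 * sinh x ^ 2) * cosh_sq' x

end Real

/-- If `4 ν r a² - p a + ν = 0` and `A = 12 ν r a / q` (with `q ≠ 0`), then
`U(ξ) = A csch²(ξ)` solves the once-integrated RLW traveling wave equation
`(p a - ν) U + (q a / 2) U² - ν r a² U'' = 0` for all `ξ ≠ 0`. -/
theorem rlw_csch_solution
    (p q r a ν A : ℝ) (hq : q ≠ 0)
    (h1 : 4 * ν * r * a ^ 2 - p * a + ν = 0)
    (hA : A = 12 * ν * r * a / q) :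
    ∀ ξ : ℝ, ξ ≠ 0 →
      (p * a - ν) * (A * (1 / Real.sinh ξ) ^ 2)
      + q * a / 2 * (A * (1 / Real.sinh ξ) ^ 2) ^ 2
      - ν * r * a ^ 2 * deriv (deriv (fun ξ : ℝ => A * (1 / Real.sinh ξ) ^ 2)) ξ = 0 := by
  intro ξ hξ
  have hqA : q * A = 12 * ν * r * a := by rw [hA, mul_div_cancel₀ _ hq]
  simp only [deriv_const_mul_field']
  rw [deriv_deriv_inv_sinh_sq hξ]
  linear_combination (-A * (1 / sinh ξ) ^ 2) * h1 + (a * A / 2 * (1 / sinh ξ) ^ 4) * hqA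
end

section
/- Let α ∈ (0,1], let p, q, r, ν be real numbers with ν ≠ 0, q ≠ 0, r < 0, and let ε ∈ {1, −1}. Set s = √(p² − 16 ν² r), a = (p + ε s)/(8 ν r), and A = −(3/2)(p + ε s)/q. Then the function u(x,t) = A · sech²(a x − (ν/α) t^α) satisfies the conformable time fractional RLW equation t^{1−α} ∂u/∂t + p ∂u/∂x + q u ∂u/∂x + r · t^{1−α} ∂/∂t(∂²u/∂x²) = 0 for all x ∈ ℝ and all t > 0. -/
/-!
Along the phase `ξ = a x - (ν / α) t ^ α` the conformable derivative `t ^ (1 - α) ∂ₜ` acts as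
`-ν d/dξ`, so a travelling wave `u = U ξ` turns the RLW equation into the ODE
`(p a - ν) U' + q a U U' - r ν a² U''' = 0`. The profile `S = sech²` satisfies
`S'' = 4 S - 6 S²`, hence `S''' = (4 - 12 S) S'`, and for `U = A S` the ODE becomes
`A S' ((p a - ν - 4 r ν a²) + a (q A + 12 r ν a) S) = 0`. Both brackets vanish: `a` is a root of
`4 r ν a² - p a + ν` (which is where its formula comes from) and `q A = -12 r ν a`.
-/

open Real
open scoped ContDiff

theorem deriv_comp_mul_sub_const (f : ℝ → ℝ) (a k : ℝ) :
    deriv (fun y => f (a * y - k)) = fun y => a * deriv f (a * y - k) := by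
  funext y
  simpa [deriv_comp_sub_const] using deriv_comp_mul_left a (fun z => f (z - k)) y

theorem hasDerivAt_sub_div_mul_rpow {α : ℝ} (hα : α ≠ 0) {t : ℝ} (ht : 0 < t) (b c : ℝ) :
    HasDerivAt (fun τ => b - c / α * τ ^ α) (-(c * t ^ (α - 1))) t :=
  (((hasDerivAt_rpow_const (Or.inl ht.ne')).const_mul (c / α)).const_sub b).congr_deriv
    (by field_simp)

theorem conformable_deriv_comp_sub_div_mul_rpow {α : ℝ} (hα : α ≠ 0) {t : ℝ} (ht : 0 < t)
    (b c : ℝ) {V : ℝ → ℝ} (hV : DifferentiableAt ℝ V (b - c / α * t ^ α)) :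
    t ^ (1 - α) * deriv (fun τ => V (b - c / α * τ ^ α)) t
      = -c * deriv V (b - c / α * t ^ α) := by
  have hpow : t ^ (1 - α) * t ^ (α - 1) = 1 := by
    rw [← rpow_add ht, show 1 - α + (α - 1) = 0 by ring, rpow_zero]
  rw [show deriv (fun τ => V (b - c / α * τ ^ α)) t = _ from
    (hV.hasDerivAt.comp t (hasDerivAt_sub_div_mul_rpow hα ht b c)).deriv]
  linear_combination (-c * deriv V (b - c / α * t ^ α)) * hpow

theorem contDiff_sech_sq : ContDiff ℝ ∞ fun z => (1 / cosh z) ^ 2 :=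
  (contDiff_const.div contDiff_cosh fun z => (cosh_pos z).ne').pow 2

theorem hasDerivAt_sech_sq (z : ℝ) :
    HasDerivAt (fun z => (1 / cosh z) ^ 2) (-2 * sinh z / cosh z ^ 3) z := by
  have hc := (cosh_pos z).ne'
  refine (((hasDerivAt_const z 1).fun_div (hasDerivAt_cosh z) hc).fun_pow 2).congr_deriv ?_
  norm_num
  field_simp

theorem deriv_deriv_sech_sq :
    deriv (deriv fun z => (1 / cosh z) ^ 2)
      = fun z => 4 * (1 / cosh z) ^ 2 - 6 * ((1 / cosh z) ^ 2) ^ 2 := by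
  rw [funext fun z => (hasDerivAt_sech_sq z).deriv]
  funext z
  have hc := (cosh_pos z).ne'
  refine (((hasDerivAt_sinh z).const_mul (-2)).fun_div ((hasDerivAt_cosh z).fun_pow 3)
    (pow_ne_zero 3 hc)).deriv.trans ?_
  field_simp
  linear_combination (-6 * cosh z ^ 2) * cosh_sq_sub_sinh_sq z

/-- The RLW operator evaluated on a travelling wave `U (a x - (ν / α) t ^ α)`, as a function of
the phase `ξ`. -/
noncomputable def rlwReducedOperator (p q r ν a : ℝ) (U : ℝ → ℝ) (ξ : ℝ) : ℝ :=
  (p * a - ν) * deriv U ξ + q * a * U ξ * deriv U ξ - r * ν * a ^ 2 * deriv (deriv (deriv U)) ξ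

theorem rlw_lhs_eq_rlwReducedOperator {U : ℝ → ℝ} (hU : ContDiff ℝ ∞ U) {α : ℝ} (hα : α ≠ 0)
    (p q r ν a x : ℝ) {t : ℝ} (ht : 0 < t) :
    t ^ (1 - α) * deriv (fun τ => U (a * x - ν / α * τ ^ α)) t
      + p * deriv (fun y => U (a * y - ν / α * t ^ α)) x
      + q * U (a * x - ν / α * t ^ α) * deriv (fun y => U (a * y - ν / α * t ^ α)) x
      + r * t ^ (1 - α) * deriv (fun τ => deriv (deriv fun y => U (a * y - ν / α * τ ^ α)) x) t
    = rlwReducedOperator p q r ν a U (a * x - ν / α * t ^ α) := by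
  have hut := conformable_deriv_comp_sub_div_mul_rpow hα ht (a * x) ν
    (hU.differentiable (by simp) _)
  have huxxt := conformable_deriv_comp_sub_div_mul_rpow hα ht (a * x) ν
    (V := fun z => a ^ 2 * deriv (deriv U) z)
    (((hU.iterate_deriv 2).differentiable (by simp) _).const_mul _)
  simp only [deriv_comp_mul_sub_const, deriv_const_mul_field'] at huxxt ⊢
  rw [rlwReducedOperator]
  linear_combination hut + r * huxxt

theorem rlwReducedOperator_sech_sq {A a p q r ν : ℝ}
    (hdisp : 4 * r * ν * (a * a) + -p * a + ν = 0) (hamp : q * A = -12 * r * ν * a) (ξ : ℝ) :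
    rlwReducedOperator p q r ν a (fun z => A * (1 / cosh z) ^ 2) ξ = 0 := by
  have hS''' : deriv (deriv (deriv fun z => (1 / cosh z) ^ 2)) ξ
      = (4 - 12 * (1 / cosh ξ) ^ 2) * deriv (fun z => (1 / cosh z) ^ 2) ξ := by
    rw [deriv_deriv_sech_sq, (hasDerivAt_sech_sq ξ).deriv]
    exact (((hasDerivAt_sech_sq ξ).const_mul 4).sub
      (((hasDerivAt_sech_sq ξ).fun_pow 2).const_mul 6)).deriv.trans (by ring)
  simp only [rlwReducedOperator, deriv_const_mul_field', hS''']
  linear_combination (-A * deriv (fun z => (1 / cosh z) ^ 2) ξ) * hdisp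
    + (A * a * (1 / cosh ξ) ^ 2 * deriv (fun z => (1 / cosh z) ^ 2) ξ) * hamp

theorem rlw_dispersion_relation {p r ν ε s a : ℝ} (hν : ν ≠ 0) (hr : r < 0)
    (hε : ε = 1 ∨ ε = -1) (hs : s = √(p ^ 2 - 16 * ν ^ 2 * r))
    (ha : a = (p + ε * s) / (8 * ν * r)) :
    4 * r * ν * (a * a) + -p * a + ν = 0 := by
  have hdiscrim : discrim (4 * r * ν) (-p) ν = s * s := by
    rw [hs, mul_self_sqrt (by nlinarith [sq_nonneg p, sq_nonneg ν]), discrim]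
    ring
  rw [quadratic_eq_zero_iff (by simp [hν, hr.ne]) hdiscrim, ha]
  rcases hε with rfl | rfl
  · left; ring
  · right; ring

theorem rlw_amplitude_relation {p q r ν ε s a A : ℝ} (hν : ν ≠ 0) (hq : q ≠ 0) (hr : r < 0)
    (ha : a = (p + ε * s) / (8 * ν * r)) (hA : A = -(3 / 2) * (p + ε * s) / q) :
    q * A = -12 * r * ν * a := by
  rw [hA, ha]
  field_simp [hr.ne]
  ring

/-- The sech²-type traveling wave solutions of the conformable time fractional RLW
equation `t^(1-α) u_t + p u_x + q u u_x + r t^(1-α) ∂_t (u_xx) = 0`. -/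
theorem rlw_sech_pde_solution
    (α p q r ν ε : ℝ) (hα : α ∈ Set.Ioc (0 : ℝ) 1)
    (hν : ν ≠ 0) (hq : q ≠ 0) (hr : r < 0) (hε : ε = 1 ∨ ε = -1)
    (s a A : ℝ)
    (hs : s = Real.sqrt (p ^ 2 - 16 * ν ^ 2 * r))
    (ha : a = (p + ε * s) / (8 * ν * r))
    (hA : A = -(3 / 2) * (p + ε * s) / q) :
    ∀ x t : ℝ, 0 < t →
      t ^ (1 - α) *
        deriv (fun τ : ℝ => A * (1 / Real.cosh (a * x - ν / α * τ ^ α)) ^ 2) t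
      + p * deriv (fun y : ℝ => A * (1 / Real.cosh (a * y - ν / α * t ^ α)) ^ 2) x
      + q * (A * (1 / Real.cosh (a * x - ν / α * t ^ α)) ^ 2)
          * deriv (fun y : ℝ => A * (1 / Real.cosh (a * y - ν / α * t ^ α)) ^ 2) x
      + r * t ^ (1 - α) *
          deriv (fun τ : ℝ =>
            deriv (deriv
              (fun y : ℝ => A * (1 / Real.cosh (a * y - ν / α * τ ^ α)) ^ 2)) x) t = 0 := by
  intro x t ht
  rw [rlw_lhs_eq_rlwReducedOperator (U := fun z => A * (1 / cosh z) ^ 2)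
    (contDiff_const.mul contDiff_sech_sq) hα.1.ne' p q r ν a x ht]
  exact rlwReducedOperator_sech_sq (rlw_dispersion_relation hν hr hε hs ha)
    (rlw_amplitude_relation hν hq hr ha hA) _
end

section
/- Let α ∈ (0,1], let p, q, r, ν be real numbers with ν ≠ 0, q ≠ 0, r < 0, and let ε ∈ {1, −1}. Set s = √(p² − 16 ν² r), a = (p + ε s)/(8 ν r), and A = (3/2)(p + ε s)/q. Then the function u(x,t) = A · csch²(a x − (ν/α) t^α) satisfies the conformable time fractional RLW equation t^{1−α} ∂u/∂t + p ∂u/∂x + q u ∂u/∂x + r · t^{1−α} ∂/∂t(∂²u/∂x²) = 0 at every point (x,t) with t > 0 and a x − (ν/α) t^α ≠ 0. -/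
/-!
Along the wave variable `ξ = a x - (ν/α) t^α` the conformable time derivative becomes
`-ν d/dξ`, so the equation reduces to the third-order ODE
`(p a - ν) g' + q a g g' - r ν a² g''' = 0` for the profile `g = A csch²`. Since
`(csch²)'' = 4 csch² + 6 csch⁴`, this ODE splits into a `csch² ·coth` and a `csch⁴ ·coth` part,
which vanish because `a` is a root of `4 r ν a² - p a + ν = 0` (by the quadratic formula, with
discriminant `s²`) and `q A = 12 r ν a`.
-/

open Real Filter Topology

section TravelingWave

variable {g g₁ g₂ g₃ : ℝ → ℝ} {U : Set ℝ} {a c x : ℝ}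

theorem hasDerivAt_comp_affine {g' : ℝ} (hg : HasDerivAt g g' (a * x - c)) :
    HasDerivAt (fun y => g (a * y - c)) (g' * a) x :=
  hg.comp x (((hasDerivAt_id x).const_mul a).sub_const c |>.congr_deriv (mul_one a))

theorem deriv_deriv_comp_affine (hU : IsOpen U) (hg : ∀ z ∈ U, HasDerivAt g (g₁ z) z)
    (hg₁ : ∀ z ∈ U, HasDerivAt g₁ (g₂ z) z) (hx : a * x - c ∈ U) :
    deriv (deriv fun y => g (a * y - c)) x = a ^ 2 * g₂ (a * x - c) := by
  have hnear : ∀ᶠ y in 𝓝 x, a * y - c ∈ U :=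
    (show Continuous fun y => a * y - c by fun_prop).continuousAt.preimage_mem_nhds
      (hU.mem_nhds hx)
  have hderiv : deriv (fun y => g (a * y - c)) =ᶠ[𝓝 x] fun y => g₁ (a * y - c) * a := by
    filter_upwards [hnear] with y hy
    exact (hasDerivAt_comp_affine (hg _ hy)).deriv
  rw [hderiv.deriv_eq, ((hasDerivAt_comp_affine (hg₁ _ hx)).mul_const a).deriv]
  ring

variable {w : ℝ → ℝ} {w' t : ℝ}

theorem hasDerivAt_comp_sub_wave {g' : ℝ} (hg : HasDerivAt g g' (a * x - w t))
    (hw : HasDerivAt w w' t) :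
    HasDerivAt (fun τ => g (a * x - w τ)) (-w' * g') t :=
  (hg.comp t (hw.const_sub (a * x))).congr_deriv (by ring)

theorem hasDerivAt_deriv_deriv_wave (hU : IsOpen U) (hg : ∀ z ∈ U, HasDerivAt g (g₁ z) z)
    (hg₁ : ∀ z ∈ U, HasDerivAt g₁ (g₂ z) z) (hg₂ : ∀ z ∈ U, HasDerivAt g₂ (g₃ z) z)
    (hw : HasDerivAt w w' t) (hξ : a * x - w t ∈ U) :
    HasDerivAt (fun τ => deriv (deriv fun y => g (a * y - w τ)) x)
      (-w' * (a ^ 2 * g₃ (a * x - w t))) t := by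
  have hnear : ∀ᶠ τ in 𝓝 t, a * x - w τ ∈ U :=
    (continuousAt_const.sub hw.continuousAt).preimage_mem_nhds (hU.mem_nhds hξ)
  have hxx : (fun τ => deriv (deriv fun y => g (a * y - w τ)) x)
      =ᶠ[𝓝 t] fun τ => a ^ 2 * g₂ (a * x - w τ) := by
    filter_upwards [hnear] with τ hτ
    exact deriv_deriv_comp_affine hU hg hg₁ hτ
  refine HasDerivAt.congr_of_eventuallyEq ?_ hxx
  exact ((hasDerivAt_comp_sub_wave (hg₂ _ hξ) hw).const_mul (a ^ 2)).congr_deriv (by ring)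

end TravelingWave

section CschSquared

variable {z : ℝ}

theorem hasDerivAt_csch_sq (A : ℝ) (hz : z ≠ 0) :
    HasDerivAt (fun z => A * (1 / sinh z) ^ 2) (-2 * A * cosh z / sinh z ^ 3) z := by
  have hs : sinh z ≠ 0 := sinh_ne_zero.mpr hz
  refine ((((hasDerivAt_const z 1).fun_div (hasDerivAt_sinh z) hs).fun_pow 2).const_mul A
    ).congr_deriv ?_
  simp only [Nat.reduceSub, pow_one]
  field_simp
  ring

theorem hasDerivAt_deriv_csch_sq (A : ℝ) (hz : z ≠ 0) :
    HasDerivAt (fun z => -2 * A * cosh z / sinh z ^ 3)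
      (A * (4 / sinh z ^ 2 + 6 / sinh z ^ 4)) z := by
  have hs : sinh z ≠ 0 := sinh_ne_zero.mpr hz
  refine (((hasDerivAt_cosh z).const_mul (-2 * A)).div ((hasDerivAt_sinh z).fun_pow 3)
    (pow_ne_zero 3 hs)).congr_deriv ?_
  field_simp
  linear_combination (6 * A * sinh z ^ 2) * cosh_sq z

theorem hasDerivAt_deriv2_csch_sq (A : ℝ) (hz : z ≠ 0) :
    HasDerivAt (fun z => A * (4 / sinh z ^ 2 + 6 / sinh z ^ 4))
      (A * (-8 * cosh z / sinh z ^ 3 - 24 * cosh z / sinh z ^ 5)) z := by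
  have hs : sinh z ≠ 0 := sinh_ne_zero.mpr hz
  refine ((((hasDerivAt_const z 4).div ((hasDerivAt_sinh z).fun_pow 2) (pow_ne_zero 2 hs)).add
    ((hasDerivAt_const z 6).div ((hasDerivAt_sinh z).fun_pow 4) (pow_ne_zero 4 hs))).const_mul A
    ).congr_deriv ?_
  field_simp
  ring

end CschSquared

theorem hasDerivAt_conformable_wave {α t : ℝ} (ν : ℝ) (hα : α ≠ 0) (ht : 0 < t) :
    HasDerivAt (fun τ => ν / α * τ ^ α) (ν * t ^ (α - 1)) t := by
  refine ((hasDerivAt_rpow_const (Or.inl ht.ne')).const_mul (ν / α)).congr_deriv ?_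
  field_simp

theorem rpow_one_sub_mul_rpow_sub_one {t : ℝ} (α : ℝ) (ht : 0 < t) :
    t ^ (1 - α) * t ^ (α - 1) = 1 := by
  rw [← rpow_add ht]
  norm_num

theorem rlw_wave_number_root {p r ν ε s a : ℝ} (hνr : ν * r ≠ 0) (hε : ε ^ 2 = 1)
    (hs : s ^ 2 = p ^ 2 - 16 * ν ^ 2 * r) (ha : a = (p + ε * s) / (8 * ν * r)) :
    ν - p * a + 4 * r * ν * a ^ 2 = 0 := by
  have hdiscrim : discrim (4 * r * ν) (-p) ν = (ε * s) * (ε * s) := by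
    rw [discrim]
    linear_combination (-s ^ 2) * hε - hs
  have hlead : 4 * r * ν ≠ 0 := by rw [mul_assoc, mul_comm r]; simpa using hνr
  have hroot := (quadratic_eq_zero_iff hlead hdiscrim a).mpr (Or.inl (by rw [ha]; ring))
  linear_combination hroot

theorem csch_sq_rlw_profile_ode {p q r ν a A z : ℝ} (hroot : ν - p * a + 4 * r * ν * a ^ 2 = 0)
    (hamp : q * A = 12 * r * ν * a) :
    (p * a - ν) * (-2 * A * cosh z / sinh z ^ 3)
      + q * a * (A * (1 / sinh z) ^ 2) * (-2 * A * cosh z / sinh z ^ 3)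
      - r * ν * a ^ 2 * (A * (-8 * cosh z / sinh z ^ 3 - 24 * cosh z / sinh z ^ 5)) = 0 := by
  linear_combination (2 * A * cosh z / sinh z ^ 3) * hroot
    - (2 * a * A * cosh z / sinh z ^ 5) * hamp

/-- The csch²-type traveling wave solutions of the conformable time fractional RLW
equation `t^(1-α) u_t + p u_x + q u u_x + r t^(1-α) ∂_t (u_xx) = 0`, valid where the
wave variable is nonzero. -/
theorem rlw_csch_pde_solution
    (α p q r ν ε : ℝ) (hα : α ∈ Set.Ioc (0 : ℝ) 1)
    (hν : ν ≠ 0) (hq : q ≠ 0) (hr : r < 0) (hε : ε = 1 ∨ ε = -1)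
    (s a A : ℝ)
    (hs : s = Real.sqrt (p ^ 2 - 16 * ν ^ 2 * r))
    (ha : a = (p + ε * s) / (8 * ν * r))
    (hA : A = (3 / 2) * (p + ε * s) / q) :
    ∀ x t : ℝ, 0 < t → a * x - ν / α * t ^ α ≠ 0 →
      t ^ (1 - α) *
        deriv (fun τ : ℝ => A * (1 / Real.sinh (a * x - ν / α * τ ^ α)) ^ 2) t
      + p * deriv (fun y : ℝ => A * (1 / Real.sinh (a * y - ν / α * t ^ α)) ^ 2) x
      + q * (A * (1 / Real.sinh (a * x - ν / α * t ^ α)) ^ 2)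
          * deriv (fun y : ℝ => A * (1 / Real.sinh (a * y - ν / α * t ^ α)) ^ 2) x
      + r * t ^ (1 - α) *
          deriv (fun τ : ℝ =>
            deriv (deriv
              (fun y : ℝ => A * (1 / Real.sinh (a * y - ν / α * τ ^ α)) ^ 2)) x) t = 0 := by
  intro x t ht hξ
  have hroot : ν - p * a + 4 * r * ν * a ^ 2 = 0 := by
    refine rlw_wave_number_root (mul_ne_zero hν hr.ne) (by rcases hε with rfl | rfl <;> norm_num)
      ?_ ha
    rw [hs, sq_sqrt]
    nlinarith [sq_nonneg p, mul_nonneg (sq_nonneg ν) (neg_nonneg.mpr hr.le)]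
  have hamp : q * A = 12 * r * ν * a := by
    rw [hA, ha]
    field_simp [hr.ne]
    ring
  have hw := hasDerivAt_conformable_wave ν hα.1.ne' ht
  have hut := hasDerivAt_comp_sub_wave (w := fun τ => ν / α * τ ^ α)
    (hasDerivAt_csch_sq A hξ) hw
  have hux := hasDerivAt_comp_affine (g := fun z => A * (1 / sinh z) ^ 2)
    (hasDerivAt_csch_sq A hξ)
  have huxxt := hasDerivAt_deriv_deriv_wave (w := fun τ => ν / α * τ ^ α) isOpen_ne
    (fun z => hasDerivAt_csch_sq A) (fun z => hasDerivAt_deriv_csch_sq A)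
    (fun z => hasDerivAt_deriv2_csch_sq A) hw hξ
  beta_reduce at hut hux huxxt
  rw [hut.deriv, hux.deriv, huxxt.deriv]
  set ξ := a * x - ν / α * t ^ α
  linear_combination
    (-ν * (-2 * A * cosh ξ / sinh ξ ^ 3)
      - r * ν * a ^ 2 * (A * (-8 * cosh ξ / sinh ξ ^ 3 - 24 * cosh ξ / sinh ξ ^ 5)))
        * rpow_one_sub_mul_rpow_sub_one α ht
    + csch_sq_rlw_profile_ode (z := ξ) hroot hamp
end

section
/- Let p, q, r, a, ν be real numbers with q ≠ 0, and suppose that p a² + ν² + 4 r ν² a² = 0 and A = −12 ν² a / q. Then the function U(ξ) = A · sech²(ξ) satisfies (p a² + ν²) U′(ξ) − r q a U(ξ) U′(ξ) + r ν² a² U‴(ξ) = 0 for all ξ ∈ ℝ. -/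
/-!
With `S = sech²` and `T = tanh` one has `S' = -2 T S`, `T' = S` and `T² = 1 - S`, hence
`S'' = 4 S - 6 S²` and `S''' = (4 - 12 S) S'`. For `U = A S` the left-hand side therefore
factors as `A S' ((p a² + ν² + 4 r ν² a²) - r a S (q A + 12 ν² a))`, and both brackets vanish.
-/

namespace Real

noncomputable def sechSq (x : ℝ) : ℝ := (1 / cosh x) ^ 2

lemma tanh_sq_add_sechSq (x : ℝ) : tanh x ^ 2 + sechSq x = 1 := by
  have hc : cosh x ≠ 0 := (cosh_pos x).ne'
  unfold sechSq; rw [tanh_eq_sinh_div_cosh]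
  field_simp
  linear_combination (cosh_sq x).symm

lemma hasDerivAt_tanh (x : ℝ) : HasDerivAt tanh (sechSq x) x := by
  have hc : cosh x ≠ 0 := (cosh_pos x).ne'
  have h := (hasDerivAt_sinh x).fun_div (hasDerivAt_cosh x) hc
  rw [show tanh = fun y => sinh y / cosh y from funext tanh_eq_sinh_div_cosh]
  refine h.congr_deriv ?_
  unfold sechSq
  field_simp
  linear_combination cosh_sq x

lemma hasDerivAt_sechSq (x : ℝ) : HasDerivAt sechSq (-2 * tanh x * sechSq x) x := by
  have hc : cosh x ≠ 0 := (cosh_pos x).ne'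
  have h := ((hasDerivAt_const x (1 : ℝ)).fun_div (hasDerivAt_cosh x) hc).fun_pow 2
  refine h.congr_deriv ?_
  unfold sechSq; rw [tanh_eq_sinh_div_cosh]
  norm_num
  field_simp

lemma deriv_sechSq : deriv sechSq = fun x => -2 * tanh x * sechSq x :=
  funext fun x => (hasDerivAt_sechSq x).deriv

lemma deriv_deriv_sechSq : deriv (deriv sechSq) = fun x => 4 * sechSq x - 6 * sechSq x ^ 2 := by
  funext x
  rw [deriv_sechSq]
  refine (((hasDerivAt_tanh x).const_mul (-2)).mul (hasDerivAt_sechSq x)).deriv.trans ?_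
  linear_combination (4 * sechSq x) * tanh_sq_add_sechSq x

lemma deriv_deriv_deriv_sechSq :
    deriv (deriv (deriv sechSq)) = fun x => (4 - 12 * sechSq x) * deriv sechSq x := by
  funext x
  rw [deriv_deriv_sechSq]
  refine (((hasDerivAt_sechSq x).const_mul 4).sub
    (((hasDerivAt_sechSq x).pow 2).const_mul 6)).deriv.trans ?_
  rw [deriv_sechSq]
  ring

end Real

open Real

/-- If `p a² + ν² + 4 r ν² a² = 0` and `A = -12 ν² a / q` (with `q ≠ 0`), then
`U(ξ) = A sech²(ξ)` solves the once-integrated sRLW traveling wave equation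
`(p a² + ν²) U' - r q a U U' + r ν² a² U''' = 0` for all `ξ`. -/
theorem srlw_sech_solution
    (p q r a ν A : ℝ) (hq : q ≠ 0)
    (h1 : p * a ^ 2 + ν ^ 2 + 4 * r * ν ^ 2 * a ^ 2 = 0)
    (hA : A = -12 * ν ^ 2 * a / q) :
    ∀ ξ : ℝ,
      (p * a ^ 2 + ν ^ 2) * deriv (fun ξ : ℝ => A * (1 / Real.cosh ξ) ^ 2) ξ
      - r * q * a * (A * (1 / Real.cosh ξ) ^ 2)
          * deriv (fun ξ : ℝ => A * (1 / Real.cosh ξ) ^ 2) ξ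
      + r * ν ^ 2 * a ^ 2
          * deriv (deriv (deriv (fun ξ : ℝ => A * (1 / Real.cosh ξ) ^ 2))) ξ = 0 := by
  intro ξ
  change (p * a ^ 2 + ν ^ 2) * deriv (fun ξ => A * sechSq ξ) ξ
    - r * q * a * (A * sechSq ξ) * deriv (fun ξ => A * sechSq ξ) ξ
    + r * ν ^ 2 * a ^ 2 * deriv (deriv (deriv (fun ξ => A * sechSq ξ))) ξ = 0
  simp only [deriv_const_mul_field', deriv_deriv_deriv_sechSq]
  have hqA : q * A = -12 * ν ^ 2 * a := by rw [hA]; field_simp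
  linear_combination (A * deriv sechSq ξ) * h1 - (r * a * A * sechSq ξ * deriv sechSq ξ) * hqA
end

section
/- Let p, q, r, a, ν be real numbers with q ≠ 0, and suppose that p a² + ν² + 4 r ν² a² = 0 and A = 12 ν² a / q. Then the function U(ξ) = A · csch²(ξ) satisfies (p a² + ν²) U′(ξ) − r q a U(ξ) U′(ξ) + r ν² a² U‴(ξ) = 0 for all ξ ≠ 0. -/
/-!
Write `w = csch² = 1 / sinh²`. Since `cosh² = 1 + sinh²`, `w` solves the autonomous equation
`w'' = 4 w + 6 w²`, hence `w''' = (4 + 12 w) w'`. For `U = A w` the left-hand side of the wave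
equation therefore factors as `A w' ((p a² + ν² + 4 r ν² a²) + r a (12 ν² a - q A) w)`, and both
brackets vanish by the hypotheses.
-/

open Real Filter Topology

lemma hasDerivAt_one_div_sinh_sq {x : ℝ} (hx : x ≠ 0) :
    HasDerivAt (fun ξ => (1 / sinh ξ) ^ 2) (-2 * cosh x * (1 / sinh x) ^ 3) x := by
  have hs : sinh x ≠ 0 := sinh_ne_zero.mpr hx
  refine (((hasDerivAt_const x 1).fun_div (hasDerivAt_sinh x) hs).fun_pow 2).congr_deriv ?_
  norm_num
  field_simp

lemma deriv_one_div_sinh_sq_eventuallyEq {x : ℝ} (hx : x ≠ 0) :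
    deriv (fun ξ => (1 / sinh ξ) ^ 2) =ᶠ[𝓝 x] fun ξ => -2 * cosh ξ * (1 / sinh ξ) ^ 3 :=
  eventually_ne_nhds hx |>.mono fun _ hy => (hasDerivAt_one_div_sinh_sq hy).deriv

lemma hasDerivAt_deriv_one_div_sinh_sq {x : ℝ} (hx : x ≠ 0) :
    HasDerivAt (deriv fun ξ => (1 / sinh ξ) ^ 2)
      (4 * (1 / sinh x) ^ 2 + 6 * ((1 / sinh x) ^ 2) ^ 2) x := by
  have hs : sinh x ≠ 0 := sinh_ne_zero.mpr hx
  have h := ((hasDerivAt_cosh x).const_mul (-2)).fun_mul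
    (((hasDerivAt_const x 1).fun_div (hasDerivAt_sinh x) hs).fun_pow 3)
  refine (h.congr_of_eventuallyEq (deriv_one_div_sinh_sq_eventuallyEq hx)).congr_deriv ?_
  norm_num
  field_simp
  linear_combination 6 * cosh_sq x

lemma deriv_deriv_one_div_sinh_sq_eventuallyEq {x : ℝ} (hx : x ≠ 0) :
    deriv (deriv fun ξ => (1 / sinh ξ) ^ 2) =ᶠ[𝓝 x]
      fun ξ => 4 * (1 / sinh ξ) ^ 2 + 6 * ((1 / sinh ξ) ^ 2) ^ 2 :=
  eventually_ne_nhds hx |>.mono fun _ hy => (hasDerivAt_deriv_one_div_sinh_sq hy).deriv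

lemma deriv_deriv_deriv_one_div_sinh_sq {x : ℝ} (hx : x ≠ 0) :
    deriv (deriv (deriv fun ξ => (1 / sinh ξ) ^ 2)) x =
      (4 + 12 * (1 / sinh x) ^ 2) * deriv (fun ξ => (1 / sinh ξ) ^ 2) x := by
  have hw := hasDerivAt_one_div_sinh_sq hx
  rw [(deriv_deriv_one_div_sinh_sq_eventuallyEq hx).deriv_eq,
    ((hw.const_mul 4).fun_add ((hw.fun_pow 2).const_mul 6)).deriv, hw.deriv]
  ring

/-- If `p a² + ν² + 4 r ν² a² = 0` and `A = 12 ν² a / q` (with `q ≠ 0`), then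
`U(ξ) = A csch²(ξ)` solves the once-integrated sRLW traveling wave equation
`(p a² + ν²) U' - r q a U U' + r ν² a² U''' = 0` for all `ξ ≠ 0`. -/
theorem srlw_csch_solution
    (p q r a ν A : ℝ) (hq : q ≠ 0)
    (h1 : p * a ^ 2 + ν ^ 2 + 4 * r * ν ^ 2 * a ^ 2 = 0)
    (hA : A = 12 * ν ^ 2 * a / q) :
    ∀ ξ : ℝ, ξ ≠ 0 →
      (p * a ^ 2 + ν ^ 2) * deriv (fun ξ : ℝ => A * (1 / Real.sinh ξ) ^ 2) ξ
      - r * q * a * (A * (1 / Real.sinh ξ) ^ 2)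
          * deriv (fun ξ : ℝ => A * (1 / Real.sinh ξ) ^ 2) ξ
      + r * ν ^ 2 * a ^ 2
          * deriv (deriv (deriv (fun ξ : ℝ => A * (1 / Real.sinh ξ) ^ 2))) ξ = 0 := by
  intro ξ hξ
  have hAq : q * A = 12 * ν ^ 2 * a := by rw [hA]; field_simp
  simp only [deriv_const_mul_field']
  rw [deriv_deriv_deriv_one_div_sinh_sq hξ]
  linear_combination A * deriv (fun ξ => (1 / sinh ξ) ^ 2) ξ * h1
    - r * a * A * (1 / sinh ξ) ^ 2 * deriv (fun ξ => (1 / sinh ξ) ^ 2) ξ * hAq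
end

section
/- Let p, q, r, ν be real numbers with q ≠ 0, ν ≠ 0 and 4 ν² r + p < 0, and let ε ∈ {1, −1}. Set a = ε ν √(−1/(4 ν² r + p)) and A = 12 ε (ν³/q) √(−1/(4 ν² r + p)). Then the function U(ξ) = A · csch²(ξ) satisfies (p a² + ν²) U′(ξ) − r q a U(ξ) U′(ξ) + r ν² a² U‴(ξ) = 0 for all ξ ≠ 0. -/
/-!
`f = csch²` satisfies `f'' = 4 f + 6 f²` away from `0` (from `cosh² = sinh² + 1`), hence
`f''' = 4 f' + 12 f f'`. For `U = A f` the left-hand side of the traveling wave equation is then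
`A f' ((p + 4 r ν²) a² + ν² + (12 r ν² a² - r q a A) f)`, and the choice of `a` and `A` makes
both coefficients vanish: `a² (4 ν² r + p) = -ν²` and `q a A = 12 ν² a²`.
-/

open Filter Real

noncomputable def cschSq (x : ℝ) : ℝ := (1 / sinh x) ^ 2

section Derivatives

variable {x : ℝ}

theorem hasDerivAt_cschSq (hx : x ≠ 0) :
    HasDerivAt cschSq (-2 * cosh x / sinh x ^ 3) x := by
  have hs : sinh x ≠ 0 := sinh_ne_zero.mpr hx
  have h : HasDerivAt (fun y => (sinh y)⁻¹ ^ 2)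
      (2 * (sinh x)⁻¹ * (-cosh x / sinh x ^ 2)) x := by
    simpa using ((hasDerivAt_sinh x).inv hs).fun_pow 2
  convert h using 1
  · ext y
    simp [cschSq]
  · field_simp

theorem deriv_cschSq_eventuallyEq (hx : x ≠ 0) :
    deriv cschSq =ᶠ[nhds x] fun y => -2 * cosh y / sinh y ^ 3 :=
  (eventually_ne_nhds hx).mono fun _ hy => (hasDerivAt_cschSq hy).deriv

theorem hasDerivAt_deriv_cschSq (hx : x ≠ 0) :
    HasDerivAt (deriv cschSq) (4 * cschSq x + 6 * cschSq x ^ 2) x := by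
  have hs : sinh x ≠ 0 := sinh_ne_zero.mpr hx
  have h := ((hasDerivAt_cosh x).const_mul (-2)).fun_div
    ((hasDerivAt_sinh x).fun_pow 3) (pow_ne_zero 3 hs)
  refine (h.congr_of_eventuallyEq (deriv_cschSq_eventuallyEq hx)).congr_deriv ?_
  simp only [cschSq]
  field_simp
  linear_combination 6 * sinh x ^ 2 * cosh_sq x

theorem deriv_deriv_cschSq_eventuallyEq (hx : x ≠ 0) :
    deriv (deriv cschSq) =ᶠ[nhds x] fun y => 4 * cschSq y + 6 * cschSq y ^ 2 :=
  (eventually_ne_nhds hx).mono fun _ hy => (hasDerivAt_deriv_cschSq hy).deriv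

theorem deriv_deriv_deriv_cschSq (hx : x ≠ 0) :
    deriv (deriv (deriv cschSq)) x = 4 * deriv cschSq x + 12 * cschSq x * deriv cschSq x := by
  have hf := hasDerivAt_cschSq hx
  rw [(deriv_deriv_cschSq_eventuallyEq hx).deriv_eq,
    ((hf.const_mul 4).fun_add ((hf.fun_pow 2).const_mul 6)).deriv, hf.deriv]
  ring

end Derivatives

theorem sq_mul_eq_neg_sq_of_eq_mul_sqrt {ε ν D a : ℝ} (hε : ε ^ 2 = 1) (hD : D < 0)
    (ha : a = ε * ν * √(-1 / D)) : a ^ 2 * D = -ν ^ 2 := by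
  have hS : √(-1 / D) ^ 2 = -1 / D := sq_sqrt (div_nonneg_of_nonpos (by norm_num) hD.le)
  rw [ha, mul_pow, mul_pow, hε, hS]
  field_simp [hD.ne]

theorem srlw_residual_const_mul_eq_zero {f : ℝ → ℝ} {ξ p q r ν a A : ℝ}
    (hf : deriv (deriv (deriv f)) ξ = 4 * deriv f ξ + 12 * f ξ * deriv f ξ)
    (ha : a ^ 2 * (4 * ν ^ 2 * r + p) = -ν ^ 2) (hA : q * a * A = 12 * ν ^ 2 * a ^ 2) :
    (p * a ^ 2 + ν ^ 2) * deriv (fun ξ => A * f ξ) ξ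
      - r * q * a * (A * f ξ) * deriv (fun ξ => A * f ξ) ξ
      + r * ν ^ 2 * a ^ 2 * deriv (deriv (deriv (fun ξ => A * f ξ))) ξ = 0 := by
  simp only [deriv_const_mul_field']
  rw [hf]
  linear_combination A * deriv f ξ * ha - r * A * f ξ * deriv f ξ * hA

theorem srlw_csch_explicit_solution_general
    (p q r ν ε : ℝ) (hq : q ≠ 0)
    (hpr : 4 * ν ^ 2 * r + p < 0) (hε : ε = 1 ∨ ε = -1)
    (a A : ℝ)
    (ha : a = ε * ν * Real.sqrt (-1 / (4 * ν ^ 2 * r + p)))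
    (hA : A = 12 * ε * (ν ^ 3 / q) * Real.sqrt (-1 / (4 * ν ^ 2 * r + p))) :
    ∀ ξ : ℝ, ξ ≠ 0 →
      (p * a ^ 2 + ν ^ 2) * deriv (fun ξ : ℝ => A * (1 / Real.sinh ξ) ^ 2) ξ
      - r * q * a * (A * (1 / Real.sinh ξ) ^ 2)
          * deriv (fun ξ : ℝ => A * (1 / Real.sinh ξ) ^ 2) ξ
      + r * ν ^ 2 * a ^ 2
          * deriv (deriv (deriv (fun ξ : ℝ => A * (1 / Real.sinh ξ) ^ 2))) ξ = 0 := by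
  intro ξ hξ
  exact srlw_residual_const_mul_eq_zero (f := cschSq) (deriv_deriv_deriv_cschSq hξ)
    (sq_mul_eq_neg_sq_of_eq_mul_sqrt (sq_eq_one_iff.mpr hε) hpr ha) (by rw [ha, hA]; field_simp)

/-- The csch²-type traveling wave solutions of the once-integrated sRLW equation
`(p a² + ν²) U' - r q a U U' + r ν² a² U''' = 0` with explicit parameters. -/
theorem srlw_csch_explicit_solution
    (p q r ν ε : ℝ) (hq : q ≠ 0) (hν : ν ≠ 0)
    (hpr : 4 * ν ^ 2 * r + p < 0) (hε : ε = 1 ∨ ε = -1)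
    (a A : ℝ)
    (ha : a = ε * ν * Real.sqrt (-1 / (4 * ν ^ 2 * r + p)))
    (hA : A = 12 * ε * (ν ^ 3 / q) * Real.sqrt (-1 / (4 * ν ^ 2 * r + p))) :
    ∀ ξ : ℝ, ξ ≠ 0 →
      (p * a ^ 2 + ν ^ 2) * deriv (fun ξ : ℝ => A * (1 / Real.sinh ξ) ^ 2) ξ
      - r * q * a * (A * (1 / Real.sinh ξ) ^ 2)
          * deriv (fun ξ : ℝ => A * (1 / Real.sinh ξ) ^ 2) ξ
      + r * ν ^ 2 * a ^ 2
          * deriv (deriv (deriv (fun ξ : ℝ => A * (1 / Real.sinh ξ) ^ 2))) ξ = 0 :=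
  srlw_csch_explicit_solution_general p q r ν ε hq hpr hε a A ha hA
end
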